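/- arXiv:2602.20591 — 3 statements merged into one kernel-verified Lean document; each statement's English description precedes it below -/
import Mathlib

section
/- With notation as above (v ∈ M₂(Q), v ρ(a) v* = diag(φ(a), φ(a)), v*v ≤ diag(1,0), vv* = diag(1,1), and v*v commutes with ρ(A)), the element v lies in M₂(φ(A)'), i.e. v commutes with diag(φ(a), φ(a)) for all a ∈ A; consequently diag(1,1) is Murray–von Neumann subequivalent to diag(1,0) in M₂(φ(A)'), so the relative commutant φ(A)' is properly infinite. -/
/-- With `v ρ(a) v* = φ(a)⊕φ(a)`, `v*v ≤ diag(1,0)`, `vv* = diag(1,1)` and `v*v`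
commuting with each `ρ(a) = φ(a)⊕0`, the element `v` commutes with each
`φ(a)⊕φ(a)` and lies in `M₂(φ(A)')` (each entry commutes with `φ(A)`); thus `v`
witnesses `1⊕1 ≼ 1⊕0` in `M₂(φ(A)')`, so the relative commutant `φ(A)'` is properly
infinite. -/
theorem stmt_7 {A Q : Type*}
    [NormedRing A] [StarRing A] [CStarRing A] [NormedAlgebra ℂ A] [CompleteSpace A]
    [StarModule ℂ A]
    [NormedRing Q] [StarRing Q] [CStarRing Q] [NormedAlgebra ℂ Q] [CompleteSpace Q]
    [StarModule ℂ Q]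
    (φ : A →⋆ₐ[ℂ] Q)
    (v : Matrix (Fin 2) (Fin 2) Q)
    (hv : ∀ a : A, v * Matrix.diagonal ![φ a, 0] * star v = Matrix.diagonal ![φ a, φ a])
    (hle : ∃ c : Matrix (Fin 2) (Fin 2) Q,
      Matrix.diagonal ![1, 0] = star v * v + star c * c)
    (hvv : v * star v = Matrix.diagonal ![1, 1])
    (hcomm : ∀ a : A, (star v * v) * Matrix.diagonal ![φ a, 0]
      = Matrix.diagonal ![φ a, 0] * (star v * v)) :
    (∀ a : A, v * Matrix.diagonal ![φ a, φ a] = Matrix.diagonal ![φ a, φ a] * v) ∧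
    (∀ (a : A) (i j : Fin 2), v i j * φ a = φ a * v i j) := by
  letI : CStarAlgebra Q := {}
  letI := CStarAlgebra.spectralOrder Q
  haveI := CStarAlgebra.spectralOrderedRing Q
  -- Step 1: the second column of `v` vanishes.
  obtain ⟨c, hc⟩ := hle
  have hcol : v 0 1 = 0 ∧ v 1 1 = 0 := by
    have h11 := congrFun (congrFun hc 1) 1
    simp only [Matrix.add_apply, Matrix.mul_apply, Fin.sum_univ_two, Matrix.diagonal,
      Matrix.star_apply, Matrix.of_apply, Matrix.cons_val_one, Matrix.head_cons,
      if_pos rfl, if_true] at h11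
    -- h11 : 0 = star (v 0 1) * v 0 1 + star (v 1 1) * v 1 1 + (...)
    have key : star (v 0 1) * v 0 1 + star (v 1 1) * v 1 1
        + (star (c 0 1) * c 0 1 + star (c 1 1) * c 1 1) = 0 := by
      exact h11.symm
    have h1 : star (v 0 1) * v 0 1 + star (v 1 1) * v 1 1 = 0 := by
      have := (add_eq_zero_iff_of_nonneg
        (add_nonneg (star_mul_self_nonneg _) (star_mul_self_nonneg _))
        (add_nonneg (star_mul_self_nonneg _) (star_mul_self_nonneg _))).mp key
      exact this.1
    have h2 := (add_eq_zero_iff_of_nonneg (star_mul_self_nonneg _)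
      (star_mul_self_nonneg _)).mp h1
    exact ⟨(CStarRing.star_mul_self_eq_zero_iff _).mp h2.1,
      (CStarRing.star_mul_self_eq_zero_iff _).mp h2.2⟩
  -- Step 2: diag(φa,φa) * v = v * diag(φa,0)
  have key : ∀ a : A, Matrix.diagonal ![φ a, φ a] * v = v * Matrix.diagonal ![φ a, 0] := by
    intro a
    have hone : v * star v = 1 := by
      rw [hvv]
      ext i j
      fin_cases i <;> fin_cases j <;>
        simp [Matrix.diagonal, Matrix.one_apply]
    calc Matrix.diagonal ![φ a, φ a] * v
        = (v * Matrix.diagonal ![φ a, 0] * star v) * v := by rw [hv]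
      _ = v * (Matrix.diagonal ![φ a, 0] * (star v * v)) := by
          simp only [Matrix.mul_assoc]
      _ = v * ((star v * v) * Matrix.diagonal ![φ a, 0]) := by rw [hcomm]
      _ = (v * star v) * (v * Matrix.diagonal ![φ a, 0]) := by
          simp only [Matrix.mul_assoc]
      _ = v * Matrix.diagonal ![φ a, 0] := by rw [hone, one_mul]
  -- Step 3: v * diag(φa,φa) = v * diag(φa,0) since the second column of v vanishes.
  have main : ∀ a : A, v * Matrix.diagonal ![φ a, φ a] = Matrix.diagonal ![φ a, φ a] * v := by
    intro a
    rw [key a]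
    ext i j
    fin_cases i <;> fin_cases j <;>
      simp [Matrix.mul_apply, Fin.sum_univ_two, Matrix.diagonal, hcol.1, hcol.2]
  refine ⟨main, fun a i j => ?_⟩
  have := congrFun (congrFun (main a) i) j
  fin_cases i <;> fin_cases j <;>
    simpa [Matrix.mul_apply, Fin.sum_univ_two, Matrix.diagonal] using this
end

section
/- Let C be a unital C*-algebra whose unit is properly infinite and whose Cuntz semigroup W(C) is almost unperforated. Then every full positive element A ∈ C satisfies: there exists X ∈ C with X A X* = 1. (In particular, a nonunital σ-unital C*-algebra B whose corona C(B) is properly infinite with W(C(B)) almost unperforated has the strong corona factorization property.) -/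
open Filter Matrix

def cuntzLE {C : Type*} [NonUnitalRing C] [StarRing C] [TopologicalSpace C]
    {I J : Type*} [Fintype I] [Fintype J]
    (a : Matrix I I C) (b : Matrix J J C) : Prop :=
  ∃ x : ℕ → Matrix I J C,
    Tendsto (fun m => x m * b * (x m)ᴴ) atTop (nhds a)

/-!
Proper infiniteness of `1` gives `a, b` with `a a*`, `b b*` close to `1` and `a b*` close to `0`;
normalising `a*` and `b*` and one Gram–Schmidt step produce isometries `v, w` with `v* w = 0`, so
the `s i = v ^ i * w` are isometries with mutually orthogonal ranges. If `∑ₙ Xₙ A Xₙ* = 1` with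
`k` terms, the `(k+1) × k` matrix `(s i* Xₙ)` conjugates `k` copies of `A` exactly onto `k + 1`
copies of `1`, so `(k+1)[1] ≤ k[A]` and almost unperforation gives `[1] ≤ [A]`, i.e.
`y A y*` gets arbitrarily close to `1`. Once it is within distance `1` of `1` it is an invertible
positive element, and conjugating by its inverse square root gives `x A x* = 1`.
-/

open Topology

section StarRing

variable {R : Type*} [Ring R] [StarRing R]

theorem star_mul_self_sub_mul_star_mul {v : R} (hv : star v * v = 1) (w : R) :
    star (w - v * (star v * w)) * (w - v * (star v * w)) =
      star w * w - star (star v * w) * (star v * w) := by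
  simp only [star_sub, star_mul, star_star, sub_mul, mul_sub]
  have hvv : ∀ x y : R, x * star v * (v * y) = x * y := fun x y => by
    rw [mul_assoc, ← mul_assoc (star v), hv, one_mul]
  simp only [hvv, ← mul_assoc]
  abel

theorem star_pow_mul_mul_pow_mul {v w : R} (hv : star v * v = 1) (hw : star w * w = 1)
    (hvw : star v * w = 0) (i j : ℕ) :
    star (v ^ i * w) * (v ^ j * w) = if i = j then 1 else 0 := by
  wlog hij : i ≤ j generalizing i j
  · have hji := congrArg star (this j i (by omega))
    rw [star_mul, star_star] at hji
    rw [hji, if_neg (by omega), if_neg (by omega), star_zero]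
  obtain ⟨d, rfl⟩ := Nat.exists_eq_add_of_le hij
  have hcancel : star (v ^ i * w) * (v ^ (i + d) * w) = star w * (v ^ d * w) := by
    rw [star_mul, star_pow, pow_add, mul_assoc, mul_assoc, ← mul_assoc (star v ^ i),
      pow_mul_pow_eq_one i hv, one_mul]
  rw [hcancel]
  rcases d with _ | d
  · simpa using hw
  · have hwv : star w * v = 0 := by simpa using congrArg star hvw
    rw [pow_succ', mul_assoc, ← mul_assoc (star w), hwv, zero_mul, if_neg (by omega)]

end StarRing

section Cuntz

variable {C : Type*} [Ring C] [StarRing C] [TopologicalSpace C]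

theorem cuntzLE_one_diagonal_of_orthonormal {ι κ : Type*} [Fintype ι] [DecidableEq ι]
    [Fintype κ] [DecidableEq κ] {s : ι → C} (hs : ∀ i j, star (s i) * s j = (1 : Matrix ι ι C) i j)
    {A : C} {X : κ → C} (hX : ∑ n, X n * A * star (X n) = 1) :
    cuntzLE (1 : Matrix ι ι C) (diagonal fun _ : κ => A) := by
  set T : Matrix ι κ C := Matrix.of fun i n => star (s i) * X n
  have hT : T * diagonal (fun _ : κ => A) * Tᴴ = 1 := by
    ext i j
    calc (T * diagonal (fun _ : κ => A) * Tᴴ) i j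
        = star (s i) * (∑ n, X n * A * star (X n)) * s j := by
          simp [T, mul_apply, diagonal_apply, Finset.mul_sum, Finset.sum_mul, mul_assoc]
      _ = (1 : Matrix ι ι C) i j := by rw [hX, mul_one, hs]
  exact ⟨fun _ => T, by simp only [hT, tendsto_const_nhds]⟩

theorem cuntzLE_blockDiagonal_succ_of_isometries {v w : C} (hv : star v * v = 1)
    (hw : star w * w = 1) (hvw : star v * w = 0) {A : C} {k : ℕ} {X : Fin k → C}
    (hX : ∑ n, X n * A * star (X n) = 1) :
    cuntzLE (blockDiagonal fun _ : Fin (k + 1) => diagonal fun _ : Fin 1 => (1 : C))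
      (blockDiagonal fun _ : Fin k => diagonal fun _ : Fin 1 => A) := by
  rw [blockDiagonal_diagonal, blockDiagonal_diagonal, diagonal_one]
  refine cuntzLE_one_diagonal_of_orthonormal
    (s := fun p : Fin 1 × Fin (k + 1) => v ^ (p.2 : ℕ) * w) (fun p q => ?_)
    (X := fun p : Fin 1 × Fin k => X p.2) (by simpa [Fintype.sum_prod_type] using hX)
  rw [star_pow_mul_mul_pow_mul hv hw hvw, one_apply]
  simp [Prod.ext_iff, Fin.val_inj, Subsingleton.elim p.1 q.1]

theorem exists_tendsto_of_cuntzLE_diagonal_fin_one {a b : C}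
    (h : cuntzLE (diagonal fun _ : Fin 1 => a) (diagonal fun _ : Fin 1 => b)) :
    ∃ y : ℕ → C, Tendsto (fun m => y m * b * star (y m)) atTop (𝓝 a) := by
  obtain ⟨x, hx⟩ := h
  refine ⟨fun m => x m 0 0, ?_⟩
  simpa [mul_apply] using tendsto_pi_nhds.1 (tendsto_pi_nhds.1 hx 0) 0

end Cuntz

theorem norm_le_inv_one_sub_of_mul_eq_one {R : Type*} [NormedRing R] [NormOneClass R]
    {u w : R} (h : w * u = 1) (hu : ‖u - 1‖ < 1) : ‖w‖ ≤ (1 - ‖u - 1‖)⁻¹ := by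
  have hw : ‖w‖ ≤ ‖w‖ * ‖u - 1‖ + 1 :=
    calc ‖w‖ = ‖w * (u - 1) - 1‖ := by rw [mul_sub, h, mul_one, sub_sub_cancel_left, norm_neg]
      _ ≤ ‖w * (u - 1)‖ + ‖(1 : R)‖ := norm_sub_le _ _
      _ ≤ ‖w‖ * ‖u - 1‖ + 1 := by rw [norm_one]; gcongr; exact norm_mul_le _ _
  rw [← one_div, le_div_iff₀ (by linarith)]
  linarith

theorem isUnit_of_norm_sub_one_lt {R : Type*} [NormedRing R] [HasSummableGeomSeries R] {u : R}
    (h : ‖u - 1‖ < 1) : IsUnit u := by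
  simpa using isUnit_one_sub_of_norm_lt_one (x := 1 - u) (by rwa [norm_sub_rev])

section CStarAlgebra

variable {C : Type*} [CStarAlgebra C] [PartialOrder C] [StarOrderedRing C]

theorem exists_isSelfAdjoint_mul_mul_eq_one_of_isUnit {u : C} (hu : 0 ≤ u) (hunit : IsUnit u) :
    ∃ z : C, IsSelfAdjoint z ∧ z * u * z = 1 ∧ z * z * u = 1 := by
  obtain ⟨s, hs⟩ := (CFC.isUnit_sqrt_iff u hu).2 hunit
  have hu_eq : u = ↑s * ↑s := by rw [hs, CFC.sqrt_mul_sqrt_self u hu]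
  refine ⟨↑s⁻¹, ?_, ?_, ?_⟩
  · rw [← Ring.inverse_unit, hs]
    exact (CFC.sqrt_nonneg u).isSelfAdjoint.ringInverse
  · rw [hu_eq, Units.inv_mul_cancel_left, Units.mul_inv]
  · rw [hu_eq, mul_assoc, Units.inv_mul_cancel_left, Units.inv_mul]

theorem exists_isSelfAdjoint_mul_mul_eq_one_of_norm_sub_one_lt [Nontrivial C] {u : C}
    (hu : 0 ≤ u) (h : ‖u - 1‖ < 1) :
    ∃ z : C, IsSelfAdjoint z ∧ z * u * z = 1 ∧ ‖z‖ ^ 2 ≤ (1 - ‖u - 1‖)⁻¹ := by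
  obtain ⟨z, hz, hzuz, hzzu⟩ :=
    exists_isSelfAdjoint_mul_mul_eq_one_of_isUnit hu (isUnit_of_norm_sub_one_lt h)
  refine ⟨z, hz, hzuz, ?_⟩
  calc ‖z‖ ^ 2 = ‖z * z‖ := by rw [sq, ← CStarRing.norm_self_mul_star, hz.star_eq]
    _ ≤ (1 - ‖u - 1‖)⁻¹ := norm_le_inv_one_sub_of_mul_eq_one hzzu h

theorem exists_isometry_of_norm_mul_star_sub_one_lt [Nontrivial C] {a : C}
    (ha : ‖a * star a - 1‖ < 1 / 2) :
    ∃ z : C, star (star a * z) * (star a * z) = 1 ∧ ‖z‖ ^ 2 ≤ 2 := by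
  obtain ⟨z, hz, hzuz, hznorm⟩ := exists_isSelfAdjoint_mul_mul_eq_one_of_norm_sub_one_lt
    (mul_star_self_nonneg a) (ha.trans (by norm_num))
  refine ⟨z, by rwa [star_mul, star_star, hz.star_eq, mul_assoc, ← mul_assoc a, ← mul_assoc], ?_⟩
  calc ‖z‖ ^ 2 ≤ (1 - ‖a * star a - 1‖)⁻¹ := hznorm
    _ ≤ (1 / 2)⁻¹ := by gcongr; linarith
    _ = 2 := by norm_num

theorem exists_isometry_star_mul_eq_zero [Nontrivial C] {v w₀ : C} (hv : star v * v = 1)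
    (hw₀ : star w₀ * w₀ = 1) (h : ‖star v * w₀‖ < 1) :
    ∃ w : C, star w * w = 1 ∧ star v * w = 0 := by
  set c := w₀ - v * (star v * w₀)
  have hvc : star v * c = 0 := by simp only [c, mul_sub, ← mul_assoc, hv, one_mul, sub_self]
  have hcc : ‖star c * c - 1‖ < 1 := by
    rwa [star_mul_self_sub_mul_star_mul hv, hw₀, sub_sub_cancel_left, norm_neg,
      CStarRing.norm_star_mul_self, ← sq, sq_lt_one_iff₀ (norm_nonneg _)]
  obtain ⟨z, hz, hzcz, -⟩ :=
    exists_isSelfAdjoint_mul_mul_eq_one_of_norm_sub_one_lt (star_mul_self_nonneg c) hcc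
  refine ⟨c * z, ?_, by rw [← mul_assoc, hvc, zero_mul]⟩
  rwa [star_mul, hz.star_eq, mul_assoc, ← mul_assoc (star c), ← mul_assoc]

theorem exists_orthogonal_isometries_of_norm_lt [Nontrivial C] {a b : C}
    (ha : ‖a * star a - 1‖ < 1 / 2) (hb : ‖b * star b - 1‖ < 1 / 2)
    (hab : ‖a * star b‖ < 1 / 2) :
    ∃ v w : C, star v * v = 1 ∧ star w * w = 1 ∧ star v * w = 0 := by
  obtain ⟨z, hv, hz⟩ := exists_isometry_of_norm_mul_star_sub_one_lt ha
  obtain ⟨z', hw₀, hz'⟩ := exists_isometry_of_norm_mul_star_sub_one_lt hb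
  have hg : ‖star (star a * z) * (star b * z')‖ ≤ ‖z‖ * ‖a * star b‖ * ‖z'‖ := by
    calc ‖star (star a * z) * (star b * z')‖ = ‖star z * (a * star b) * z'‖ := by
          simp only [star_mul, star_star, mul_assoc]
      _ ≤ ‖z‖ * ‖a * star b‖ * ‖z'‖ := by
          refine (norm_mul_le _ _).trans ?_
          rw [← norm_star z]
          gcongr
          exact norm_mul_le _ _
  have hzz' : ‖z‖ * ‖z'‖ ≤ 2 := by
    refine (pow_le_pow_iff_left₀ (by positivity) zero_le_two two_ne_zero).1 ?_
    rw [mul_pow]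
    nlinarith
  obtain ⟨w, hw, hvw⟩ := exists_isometry_star_mul_eq_zero hv hw₀ (by
    refine hg.trans_lt ?_
    nlinarith [norm_nonneg (a * star b)])
  exact ⟨_, w, hv, hw, hvw⟩

theorem exists_orthogonal_isometries_of_cuntzLE_one [Nontrivial C] {ι : Type*} [Fintype ι]
    [DecidableEq ι] {i j : ι} (hij : i ≠ j)
    (h : cuntzLE (1 : Matrix ι ι C) (1 : Matrix (Fin 1) (Fin 1) C)) :
    ∃ v w : C, star v * v = 1 ∧ star w * w = 1 ∧ star v * w = 0 := by
  obtain ⟨x, hx⟩ := h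
  have hentry (p q : ι) :
      Tendsto (fun m => x m p 0 * star (x m q 0)) atTop (𝓝 ((1 : Matrix ι ι C) p q)) := by
    simpa [mul_apply] using tendsto_pi_nhds.1 (tendsto_pi_nhds.1 hx p) q
  have hclose (p q : ι) := Metric.tendsto_nhds.1 (hentry p q) (1 / 2) one_half_pos
  obtain ⟨m, hii, hjj, hij'⟩ := ((hclose i i).and ((hclose j j).and (hclose i j))).exists
  rw [one_apply_eq, dist_eq_norm] at hii hjj
  rw [one_apply_ne hij, dist_zero_right] at hij'
  exact exists_orthogonal_isometries_of_norm_lt hii hjj hij'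

theorem exists_diagonal_eq_conjTranspose_mul_self {ι : Type*} [Fintype ι] [DecidableEq ι]
    {d : ι → C} (hd : ∀ i, 0 ≤ d i) : ∃ c : Matrix ι ι C, diagonal d = cᴴ * c := by
  refine ⟨diagonal fun i => CFC.sqrt (d i), ?_⟩
  rw [diagonal_conjTranspose, diagonal_mul_diagonal]
  congr 1
  ext i
  rw [Pi.star_apply, (CFC.sqrt_nonneg (d i)).isSelfAdjoint.star_eq, CFC.sqrt_mul_sqrt_self _ (hd i)]

theorem exists_mul_mul_star_eq_one_of_tendsto {A : C} (hA : 0 ≤ A) {y : ℕ → C}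
    (hy : Tendsto (fun m => y m * A * star (y m)) atTop (𝓝 1)) :
    ∃ x : C, x * A * star x = 1 := by
  obtain ⟨m, hm⟩ := (Metric.tendsto_nhds.1 hy 1 one_pos).exists
  rw [dist_eq_norm] at hm
  obtain ⟨z, hz, hzuz, -⟩ := exists_isSelfAdjoint_mul_mul_eq_one_of_isUnit
    (star_right_conjugate_nonneg hA (y m)) (isUnit_of_norm_sub_one_lt hm)
  refine ⟨z * y m, ?_⟩
  rwa [star_mul, hz.star_eq, ← mul_assoc, mul_assoc z, mul_assoc z]

end CStarAlgebra

/-- If the unit of the unital C*-algebra `C` is properly infinite and the Cuntz semigroup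
`W(C)` is almost unperforated, then every full positive element `A` admits `X` with
`X A X* = 1` (strong corona factorization property for corona algebras). -/
theorem stmt_10 {C : Type*} [NormedRing C] [StarRing C] [CStarRing C]
    [NormedAlgebra ℂ C] [CompleteSpace C] [StarModule ℂ C]
    [PartialOrder C] [StarOrderedRing C]
    (hpi : cuntzLE
      (Matrix.blockDiagonal fun _ : Fin 2 => Matrix.diagonal fun _ : Fin 1 => (1 : C))
      (Matrix.diagonal fun _ : Fin 1 => (1 : C)))
    (hau : ∀ (j l n m : ℕ) (a : Matrix (Fin j) (Fin j) C) (b : Matrix (Fin l) (Fin l) C),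
      (∃ c, a = cᴴ * c) → (∃ c, b = cᴴ * c) → m < n →
      cuntzLE (Matrix.blockDiagonal fun _ : Fin n => a)
        (Matrix.blockDiagonal fun _ : Fin m => b) →
      cuntzLE a b)
    (A : C) (hA : 0 ≤ A)
    (hfull : ∃ (k : ℕ) (X : Fin k → C), ∑ n, X n * A * star (X n) = 1) :
    ∃ x : C, x * A * star x = 1 := by
  let _ : CStarAlgebra C := { ‹NormedRing C›, ‹StarRing C›, ‹CStarRing C›, ‹NormedAlgebra ℂ C›,
    ‹StarModule ℂ C›, ‹CompleteSpace C› with }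
  nontriviality C
  obtain ⟨k, X, hX⟩ := hfull
  rw [diagonal_one, ← Pi.one_def, blockDiagonal_one] at hpi
  obtain ⟨v, w, hv, hw, hvw⟩ :=
    exists_orthogonal_isometries_of_cuntzLE_one (i := (0, 0)) (j := (0, 1)) (by decide) hpi
  have hle := hau 1 1 (k + 1) k _ _ (exists_diagonal_eq_conjTranspose_mul_self fun _ => zero_le_one)
    (exists_diagonal_eq_conjTranspose_mul_self fun _ => hA) k.lt_succ_self
    (cuntzLE_blockDiagonal_succ_of_isometries hv hw hvw hX)
  obtain ⟨y, hy⟩ := exists_tendsto_of_cuntzLE_diagonal_fin_one hle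
  exact exists_mul_mul_star_eq_one_of_tendsto hA hy
end

section
/- Let Q be a unital C*-algebra with isometries S, T ∈ Q such that SS* + TT* ≤ 1, let φ : A → Q be a unital *-homomorphism, and let w ∈ Q satisfy w φ(a) w* = Sφ(a)S* + Tφ(a)T* for all a ∈ A. In M₂(Q) set S̃ = diag(S,0), T̃ = diag(T,0), w̃ = diag(w,0), e₂₁ = [[0,0],[1,0]], and v = (S̃* + e₂₁ T̃*) w̃. Then v is a partial isometry and v · diag(φ(a), 0) · v* = diag(φ(a), φ(a)) for all a ∈ A. -/
set_option maxHeartbeats 1000000 in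
/-- The construction of a partial isometry `v = (S̃* + e₂₁ T̃*) w̃ ∈ M₂(Q)` with
`v (φ(a)⊕0) v* = φ(a)⊕φ(a)` for all `a`, from isometries `S, T` with orthogonal ranges
and `w` with `w φ(a) w* = Sφ(a)S* + Tφ(a)T*`. -/
theorem stmt_18 {A Q : Type*}
    [NormedRing A] [StarRing A] [CStarRing A] [NormedAlgebra ℂ A] [CompleteSpace A]
    [StarModule ℂ A]
    [NormedRing Q] [StarRing Q] [CStarRing Q] [NormedAlgebra ℂ Q] [CompleteSpace Q]
    [StarModule ℂ Q] [PartialOrder Q] [StarOrderedRing Q]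
    (S T : Q) (hS : star S * S = 1) (hT : star T * T = 1)
    (hST : S * star S + T * star T ≤ 1)
    (φ : A →⋆ₐ[ℂ] Q) (w : Q)
    (hw : ∀ a : A, w * φ a * star w = S * φ a * star S + T * φ a * star T)
    (e : Matrix (Fin 2) (Fin 2) Q) (he : e = Matrix.of ![![0, 0], ![1, 0]])
    (v : Matrix (Fin 2) (Fin 2) Q)
    (hv : v = (star (Matrix.diagonal ![S, 0]) + e * star (Matrix.diagonal ![T, 0])) *
      Matrix.diagonal ![w, 0]) :
    v * star v * v = v ∧
    ∀ a : A, v * Matrix.diagonal ![φ a, 0] * star v = Matrix.diagonal ![φ a, φ a] := by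
  -- orthogonality of ranges
  have hle : T * star T ≤ 1 - S * star S := by
    rw [le_sub_iff_add_le, add_comm]; exact hST
  have h2 : star T * S = 0 := by
    rw [← CStarRing.star_mul_self_eq_zero_iff]
    refine le_antisymm ?_ (star_mul_self_nonneg _)
    calc star (star T * S) * (star T * S) = star S * (T * star T) * S := by
          simp [star_mul, mul_assoc]
      _ ≤ star S * (1 - S * star S) * S := star_left_conjugate_le_conjugate hle S
      _ = 0 := by
          rw [mul_sub, sub_mul, mul_one, hS]
          rw [show star S * (S * star S) * S = (star S * S) * (star S * S) by noncomm_ring]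
          rw [hS]; simp
  have h1 : star S * T = 0 := by
    have := congrArg star h2; simpa using this
  have hww : w * star w = S * star S + T * star T := by
    have := hw 1; simpa using this
  have kS : star S * (w * star w) = star S := by
    rw [hww, mul_add, ← mul_assoc, ← mul_assoc, hS, h1, one_mul, zero_mul, add_zero]
  have kT : star T * (w * star w) = star T := by
    rw [hww, mul_add, ← mul_assoc, ← mul_assoc, hT, h2, one_mul, zero_mul, zero_add]
  have l1 : star S * (w * (star w * S)) = 1 := by
    rw [show star S * (w * (star w * S)) = star S * (w * star w) * S by noncomm_ring, kS, hS]
  have l2 : star S * (w * (star w * T)) = 0 := by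
    rw [show star S * (w * (star w * T)) = star S * (w * star w) * T by noncomm_ring, kS, h1]
  have l3 : star T * (w * (star w * S)) = 0 := by
    rw [show star T * (w * (star w * S)) = star T * (w * star w) * S by noncomm_ring, kT, h2]
  have l4 : star T * (w * (star w * T)) = 1 := by
    rw [show star T * (w * (star w * T)) = star T * (w * star w) * T by noncomm_ring, kT, hT]
  have hv' : v = Matrix.of ![![star S * w, 0], ![star T * w, 0]] := by
    subst hv he
    ext i j
    fin_cases i <;> fin_cases j <;>
      simp [Matrix.mul_apply, Fin.sum_univ_succ, Matrix.star_eq_conjTranspose,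
        Matrix.diagonal_conjTranspose, Matrix.vecMul_diagonal, Matrix.diagonal_apply]
  have hvv : v * star v = 1 := by
    rw [hv']
    ext i j
    fin_cases i <;> fin_cases j <;>
      simp [Matrix.mul_apply, Fin.sum_univ_succ, Matrix.star_apply, Matrix.one_apply,
        star_mul, mul_assoc, l1, l2, l3, l4]
  constructor
  · rw [hvv, one_mul]
  · intro a
    have kSa : star S * (w * φ a * star w) = φ a * star S := by
      rw [hw a, mul_add, show star S * (S * φ a * star S) = (star S * S) * (φ a * star S) by noncomm_ring,
        show star S * (T * φ a * star T) = (star S * T) * (φ a * star T) by noncomm_ring,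
        hS, h1, one_mul, zero_mul, add_zero]
    have kTa : star T * (w * φ a * star w) = φ a * star T := by
      rw [hw a, mul_add, show star T * (S * φ a * star S) = (star T * S) * (φ a * star S) by noncomm_ring,
        show star T * (T * φ a * star T) = (star T * T) * (φ a * star T) by noncomm_ring,
        hT, h2, one_mul, zero_mul, zero_add]
    have m1 : star S * (w * (φ a * (star w * S))) = φ a := by
      rw [show star S * (w * (φ a * (star w * S))) = star S * (w * φ a * star w) * S by noncomm_ring,
        kSa, mul_assoc, hS, mul_one]
    have m2 : star S * (w * (φ a * (star w * T))) = 0 := by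
      rw [show star S * (w * (φ a * (star w * T))) = star S * (w * φ a * star w) * T by noncomm_ring,
        kSa, mul_assoc, h1, mul_zero]
    have m3 : star T * (w * (φ a * (star w * S))) = 0 := by
      rw [show star T * (w * (φ a * (star w * S))) = star T * (w * φ a * star w) * S by noncomm_ring,
        kTa, mul_assoc, h2, mul_zero]
    have m4 : star T * (w * (φ a * (star w * T))) = φ a := by
      rw [show star T * (w * (φ a * (star w * T))) = star T * (w * φ a * star w) * T by noncomm_ring,
        kTa, mul_assoc, hT, mul_one]
    rw [hv']
    ext i j
    fin_cases i <;> fin_cases j <;>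
      simp [Matrix.mul_apply, Fin.sum_univ_succ, Matrix.star_apply, Matrix.diagonal_apply,
        Matrix.vecMul_diagonal, star_mul, mul_assoc, m1, m2, m3, m4]
end
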